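/- Let A be an action model with A = G(A, E₀^A) (generated by its actual events) and let S be a propositional action emulation witnessing A ⇄_P B. Then for every event x ∈ E^A, Pre^A(x) ⊨ ⋁_{y : S(x,y)} Pre^B(y). -/

import Mathlib

/-!
Write `PreCovered S x` for `Pre(x) ⊨ ⋁_{y : S(x,y)} Pre(y)`; the proof is an induction along a
reachability path from an actual event. Zig0 covers the actual events. For a step `x → x'`,
`Pre(x)` is satisfiable, so coverage of `x` yields at least one partner `y` with `S x y`, and Zig
applied to `(x, y)` then covers `x'`.
-/

/-- Modal formulas over label set `A` and proposition set `P`. -/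
inductive Form (A P : Type) : Type
  | top : Form A P
  | atom : P → Form A P
  | neg : Form A P → Form A P
  | or : Form A P → Form A P → Form A P
  | dia : A → Form A P → Form A P

namespace Form
variable {A P : Type}
def and (φ ψ : Form A P) : Form A P := Form.neg ((Form.neg φ).or (Form.neg ψ))
def box (a : A) (φ : Form A P) : Form A P := Form.neg (Form.dia a (Form.neg φ))
def bot : Form A P := Form.neg Form.top
def imp (φ ψ : Form A P) : Form A P := (Form.neg φ).or ψ
end Form

/-- Kripke models. -/
structure Kripke (A P : Type) : Type 1 where
  W : Type
  val : W → P → Prop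
  rel : A → W → W → Prop
  actual : Set W

variable {A P : Type}

/-- Satisfaction of a modal formula at a world. -/
def sat (M : Kripke A P) : M.W → Form A P → Prop
  | _, .top => True
  | w, .atom p => M.val w p
  | w, .neg φ => ¬ sat M w φ
  | w, .or φ ψ => sat M w φ ∨ sat M w ψ
  | w, .dia a φ => ∃ v, M.rel a w v ∧ sat M v φ

/-- Semantic entailment over all Kripke models. -/
def entails (φ ψ : Form A P) : Prop := ∀ (M : Kripke A P) (w : M.W), sat M w φ → sat M w ψ

/-- Semantic equivalence. -/
def equivF (φ ψ : Form A P) : Prop := entails φ ψ ∧ entails ψ φ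

def satisfiable (φ : Form A P) : Prop := ∃ (M : Kripke A P) (w : M.W), sat M w φ

def valid (φ : Form A P) : Prop := ∀ (M : Kripke A P) (w : M.W), sat M w φ

/-- Finite disjunction (empty disjunction is `⊥`). -/
def bigOr : List (Form A P) → Form A P
  | [] => Form.bot
  | φ :: l => φ.or (bigOr l)

/-- Finite conjunction (empty conjunction is `⊤`). -/
def bigAnd : List (Form A P) → Form A P
  | [] => Form.top
  | φ :: l => φ.and (bigAnd l)

/-- `⋀_{a ∈ A} □_a (ξ a)` for a finite label set `A`. -/
noncomputable def boxConj [Fintype A] (ξ : A → Form A P) : Form A P :=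
  bigAnd ((Finset.univ : Finset A).toList.map fun a => Form.box a (ξ a))

/-- `R` is a bisimulation between Kripke models `M` and `N`. -/
def IsBisim (M N : Kripke A P) (R : M.W → N.W → Prop) : Prop :=
  ∀ w v, R w v →
    ((∀ p, M.val w p ↔ N.val v p) ∧
     (∀ a w', M.rel a w w' → ∃ v', N.rel a v v' ∧ R w' v') ∧
     (∀ a v', N.rel a v v' → ∃ w', M.rel a w w' ∧ R w' v'))

/-- Pointed bisimilarity of Kripke models (Zig0/Zag0 on actual worlds). -/
def Bisimilar (M N : Kripke A P) : Prop :=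
  ∃ R, IsBisim M N R ∧ (∀ w ∈ M.actual, ∃ v ∈ N.actual, R w v) ∧
       (∀ v ∈ N.actual, ∃ w ∈ M.actual, R w v)

/-- Action models. -/
structure ActionModel (A P : Type) : Type 1 where
  E : Type
  pre : E → Form A P
  rel : A → E → E → Prop
  actual : Set E

/-- The update product `M ⊗ 𝔄`. -/
def update (M : Kripke A P) (𝔄 : ActionModel A P) : Kripke A P where
  W := {p : M.W × 𝔄.E // sat M p.1 (𝔄.pre p.2)}
  val w p := M.val w.1.1 p
  rel a w v := M.rel a w.1.1 v.1.1 ∧ 𝔄.rel a w.1.2 v.1.2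
  actual := {w | w.1.1 ∈ M.actual ∧ w.1.2 ∈ 𝔄.actual}

/-- Action model equivalence: same updating effect (up to bisimilarity) on every Kripke model. -/
def AMEquiv (𝔄 𝔅 : ActionModel A P) : Prop :=
  ∀ M : Kripke A P, Bisimilar (update M 𝔄) (update M 𝔅)

/-- `S` is an action bisimulation between action models `𝔄` and `𝔅`. -/
def IsActBisim (𝔄 𝔅 : ActionModel A P) (S : 𝔄.E → 𝔅.E → Prop) : Prop :=
  ∀ x y, S x y →
    (equivF (𝔄.pre x) (𝔅.pre y) ∧
     (∀ a x', 𝔄.rel a x x' → satisfiable ((𝔄.pre x).and (Form.dia a (𝔄.pre x'))) →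
        ∃ y', 𝔅.rel a y y' ∧ S x' y') ∧
     (∀ a y', 𝔅.rel a y y' → satisfiable ((𝔅.pre y).and (Form.dia a (𝔅.pre y'))) →
        ∃ x', 𝔄.rel a x x' ∧ S x' y'))

/-- Action bisimilarity of action models (with Zig0/Zag0 on actual events). -/
def ActBisimilar (𝔄 𝔅 : ActionModel A P) : Prop :=
  ∃ S, IsActBisim 𝔄 𝔅 S ∧ (∀ x ∈ 𝔄.actual, ∃ y ∈ 𝔅.actual, S x y) ∧
       (∀ y ∈ 𝔅.actual, ∃ x ∈ 𝔄.actual, S x y)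

/-- Zig of the generalized action emulation:
`η(x,y) ⊨ □_a (Pre^𝔄(x') → ⋁_{y →_a y'} (Pre^𝔅(y') ∧ η(x',y')))`, rendered semantically. -/
def GAEZig (𝔄 𝔅 : ActionModel A P) (η : 𝔄.E → 𝔅.E → Form A P) : Prop :=
  ∀ (a : A) (x : 𝔄.E) (y : 𝔅.E) (x' : 𝔄.E), 𝔄.rel a x x' →
    ∀ (M : Kripke A P) (w v : M.W), sat M w (η x y) → M.rel a w v → sat M v (𝔄.pre x') →
      ∃ y', 𝔅.rel a y y' ∧ sat M v (𝔅.pre y') ∧ sat M v (η x' y')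

/-- Zag of the generalized action emulation. -/
def GAEZag (𝔄 𝔅 : ActionModel A P) (η : 𝔄.E → 𝔅.E → Form A P) : Prop :=
  ∀ (a : A) (x : 𝔄.E) (y : 𝔅.E) (y' : 𝔅.E), 𝔅.rel a y y' →
    ∀ (M : Kripke A P) (w v : M.W), sat M w (η x y) → M.rel a w v → sat M v (𝔅.pre y') →
      ∃ x', 𝔄.rel a x x' ∧ sat M v (𝔄.pre x') ∧ sat M v (η x' y')

/-- Zig0 of the generalized action emulation:
`Pre^𝔄(x) ⊨ ⋁_{y ∈ E₀^𝔅} (Pre^𝔅(y) ∧ η(x,y))` for actual `x`. -/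
def GAEZig0 (𝔄 𝔅 : ActionModel A P) (η : 𝔄.E → 𝔅.E → Form A P) : Prop :=
  ∀ x ∈ 𝔄.actual, ∀ (M : Kripke A P) (w : M.W), sat M w (𝔄.pre x) →
    ∃ y ∈ 𝔅.actual, sat M w (𝔅.pre y) ∧ sat M w (η x y)

/-- Zag0 of the generalized action emulation. -/
def GAEZag0 (𝔄 𝔅 : ActionModel A P) (η : 𝔄.E → 𝔅.E → Form A P) : Prop :=
  ∀ y ∈ 𝔅.actual, ∀ (M : Kripke A P) (w : M.W), sat M w (𝔅.pre y) →
    ∃ x ∈ 𝔄.actual, sat M w (𝔄.pre x) ∧ sat M w (η x y)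

/-- `η` is a generalized action emulation witnessing `𝔄 ⇄_G 𝔅`. -/
def IsGAE (𝔄 𝔅 : ActionModel A P) (η : 𝔄.E → 𝔅.E → Form A P) : Prop :=
  GAEZig 𝔄 𝔅 η ∧ GAEZag 𝔄 𝔅 η ∧ GAEZig0 𝔄 𝔅 η ∧ GAEZag0 𝔄 𝔅 η

/-- `S` is a propositional action emulation witnessing `𝔄 ⇄_P 𝔅`
(Consistency, Zig, Zag, Zig0, Zag0; disjunctions rendered semantically). -/
def IsPAEW (𝔄 𝔅 : ActionModel A P) (S : 𝔄.E → 𝔅.E → Prop) : Prop :=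
  (∀ x y, S x y → satisfiable ((𝔄.pre x).and (𝔅.pre y))) ∧
  (∀ (a : A) x y x', S x y → 𝔄.rel a x x' →
     ∀ (M : Kripke A P) (w : M.W), sat M w (𝔄.pre x') →
       ∃ y', 𝔅.rel a y y' ∧ S x' y' ∧ sat M w (𝔅.pre y')) ∧
  (∀ (a : A) x y y', S x y → 𝔅.rel a y y' →
     ∀ (M : Kripke A P) (w : M.W), sat M w (𝔅.pre y') →
       ∃ x', 𝔄.rel a x x' ∧ S x' y' ∧ sat M w (𝔄.pre x')) ∧
  (∀ x ∈ 𝔄.actual, ∀ (M : Kripke A P) (w : M.W), sat M w (𝔄.pre x) →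
     ∃ y ∈ 𝔅.actual, S x y ∧ sat M w (𝔅.pre y)) ∧
  (∀ y ∈ 𝔅.actual, ∀ (M : Kripke A P) (w : M.W), sat M w (𝔅.pre y) →
     ∃ x ∈ 𝔄.actual, S x y ∧ sat M w (𝔄.pre x))

/-- `S` is an action emulation witnessing `𝔄 ⇄ 𝔅`
(Consistency, Zig, Zag, Zig0, Zag0; disjunctions and boxes rendered semantically). -/
def IsAEW (𝔄 𝔅 : ActionModel A P) (S : 𝔄.E → 𝔅.E → Prop) : Prop :=
  (∀ x y, S x y → satisfiable ((𝔄.pre x).and (𝔅.pre y))) ∧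
  (∀ (a : A) x y x', S x y → 𝔄.rel a x x' →
     ∀ (M : Kripke A P) (w v : M.W), sat M w (𝔄.pre x) → sat M w (𝔅.pre y) →
       M.rel a w v → sat M v (𝔄.pre x') →
       ∃ y', 𝔅.rel a y y' ∧ S x' y' ∧ sat M v (𝔅.pre y')) ∧
  (∀ (a : A) x y y', S x y → 𝔅.rel a y y' →
     ∀ (M : Kripke A P) (w v : M.W), sat M w (𝔄.pre x) → sat M w (𝔅.pre y) →
       M.rel a w v → sat M v (𝔅.pre y') →
       ∃ x', 𝔄.rel a x x' ∧ S x' y' ∧ sat M v (𝔄.pre x')) ∧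
  (∀ x ∈ 𝔄.actual, ∀ (M : Kripke A P) (w : M.W), sat M w (𝔄.pre x) →
     ∃ y ∈ 𝔅.actual, S x y ∧ sat M w (𝔅.pre y)) ∧
  (∀ y ∈ 𝔅.actual, ∀ (M : Kripke A P) (w : M.W), sat M w (𝔅.pre y) →
     ∃ x ∈ 𝔄.actual, S x y ∧ sat M w (𝔄.pre x))

/-- `L₀`: formulas `α` such that if `α` is satisfiable and `α ⊨ □_a φ` then `φ` is valid. -/
def L0 : Set (Form A P) :=
  {α | satisfiable α → ∀ (a : A) (φ : Form A P), entails α (Form.box a φ) → valid φ}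

/-- `Φ` is `Ψ`-regular. -/
def Regular (Φ Ψ : Set (Form A P)) : Prop :=
  ∀ φ ∈ Φ, ∀ ψ ∈ Ψ, entails ψ φ ∨ entails ψ φ.neg

/-- `Φ` is `Ψ`-basis: every `φ ∈ Φ` is equivalent to a disjunction of a subset of `Ψ`
(disjunction rendered semantically). -/
def IsBasisFor (Φ Ψ : Set (Form A P)) : Prop :=
  ∀ φ ∈ Φ, ∃ Ψ' ⊆ Ψ, ∀ (M : Kripke A P) (w : M.W), sat M w φ ↔ ∃ ψ ∈ Ψ', sat M w ψ

/-- `Φ` is `Ψ`-discrete: if `φ ∈ Φ` entails a finite disjunction `⋁_l ⋀_a □_a ξ_l^a`, then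
`φ ⊨ ⋁_l ⋁ G(⋀_a □_a ξ_l^a, Ψ)` (outer disjunctions rendered semantically). -/
def Discrete [Fintype A] (Φ Ψ : Set (Form A P)) : Prop :=
  ∀ φ ∈ Φ, ∀ (L : ℕ) (ξ : Fin L → A → Form A P),
    entails φ (bigOr ((List.finRange L).map fun l => boxConj (ξ l))) →
    ∀ (M : Kripke A P) (w : M.W), sat M w φ →
      ∃ (l : Fin L), ∃ ψ ∈ Ψ, entails ψ (boxConj (ξ l)) ∧ sat M w ψ

/-- `Φ` is `Ψ`-known: if `φ ∈ Φ` and `φ ⊨ □_a ξ`, then `φ ⊨ □_a ⋁ G(ξ, Ψ)`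
(inner disjunction rendered semantically). -/
def Known (Φ Ψ : Set (Form A P)) : Prop :=
  ∀ φ ∈ Φ, ∀ (a : A) (χ : Form A P), entails φ (Form.box a χ) →
    ∀ (M : Kripke A P) (w v : M.W), sat M w φ → M.rel a w v →
      ∃ ψ ∈ Ψ, entails ψ χ ∧ sat M v ψ

/-- `R_a^𝔄(x)`. -/
def Rset (𝔄 : ActionModel A P) (a : A) (x : 𝔄.E) : Set 𝔄.E :=
  {y | satisfiable ((𝔄.pre x).and (Form.dia a (𝔄.pre y)))}

/-- `Q_a^𝔄(x)`. -/
def Qset (𝔄 : ActionModel A P) (a : A) (x : 𝔄.E) : Set 𝔄.E :=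
  {y | 𝔄.rel a x y ∧ satisfiable ((𝔄.pre x).and (Form.dia a (𝔄.pre y)))}

/-- Modal depth. -/
def depth : Form A P → ℕ
  | .top => 0
  | .atom _ => 0
  | .neg φ => depth φ
  | .or φ ψ => max (depth φ) (depth ψ)
  | .dia _ φ => depth φ + 1

/-- Subformulas. -/
def Subf : Form A P → List (Form A P)
  | .top => [.top]
  | .atom p => [.atom p]
  | .neg φ => .neg φ :: Subf φ
  | .or φ ψ => .or φ ψ :: (Subf φ ++ Subf ψ)
  | .dia a φ => .dia a φ :: Subf φ

/-- Single negation. -/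
def singleNeg : Form A P → Form A P
  | .neg φ => φ
  | φ => .neg φ

/-- Closure under subformulas and single negations. -/
def closureF (φ : Form A P) : Set (Form A P) :=
  {χ | χ ∈ Subf φ ∨ ∃ ψ ∈ Subf φ, χ = singleNeg ψ}

/-- One step of reachability inside an action model: `x` reaches `y` via some label `a`
with `x →_a y` and `Pre(x) ∧ ◇_a Pre(y)` satisfiable. -/
def stepRel (𝔄 : ActionModel A P) (x y : 𝔄.E) : Prop :=
  ∃ a : A, 𝔄.rel a x y ∧ satisfiable ((𝔄.pre x).and (Form.dia a (𝔄.pre y)))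

theorem sat_and {M : Kripke A P} {w : M.W} {φ ψ : Form A P} :
    sat M w (φ.and ψ) ↔ sat M w φ ∧ sat M w ψ := by
  simp only [Form.and, sat, not_or, not_not]

theorem satisfiable.of_and_left {φ ψ : Form A P} (h : satisfiable (φ.and ψ)) :
    satisfiable φ := by
  obtain ⟨M, w, hw⟩ := h
  exact ⟨M, w, (sat_and.mp hw).1⟩

theorem stepRel.satisfiable_pre {𝔄 : ActionModel A P} {x x' : 𝔄.E} (h : stepRel 𝔄 x x') :
    satisfiable (𝔄.pre x) := by
  obtain ⟨_, _, hsat⟩ := h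
  exact hsat.of_and_left

def PreCovered {𝔄 𝔅 : ActionModel A P} (S : 𝔄.E → 𝔅.E → Prop) (x : 𝔄.E) : Prop :=
  ∀ (M : Kripke A P) (w : M.W), sat M w (𝔄.pre x) → ∃ y, S x y ∧ sat M w (𝔅.pre y)

namespace IsPAEW

variable {𝔄 𝔅 : ActionModel A P} {S : 𝔄.E → 𝔅.E → Prop}

theorem preCovered_of_mem_actual (hS : IsPAEW 𝔄 𝔅 S) {x : 𝔄.E} (hx : x ∈ 𝔄.actual) :
    PreCovered S x := by
  intro M w hw
  obtain ⟨y, -, hxy, hy⟩ := hS.2.2.2.1 x hx M w hw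
  exact ⟨y, hxy, hy⟩

theorem preCovered_of_rel (hS : IsPAEW 𝔄 𝔅 S) {a : A} {x x' : 𝔄.E} {y : 𝔅.E}
    (hxy : S x y) (hxx' : 𝔄.rel a x x') : PreCovered S x' := by
  intro M w hw
  obtain ⟨y', -, hxy', hy'⟩ := hS.2.1 a x y x' hxy hxx' M w hw
  exact ⟨y', hxy', hy'⟩

theorem preCovered_of_stepRel (hS : IsPAEW 𝔄 𝔅 S) {x x' : 𝔄.E}
    (hx : PreCovered S x) (hstep : stepRel 𝔄 x x') : PreCovered S x' := by
  obtain ⟨M, w, hw⟩ := hstep.satisfiable_pre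
  obtain ⟨y, hxy, -⟩ := hx M w hw
  obtain ⟨a, hxx', -⟩ := hstep
  exact hS.preCovered_of_rel hxy hxx'

theorem preCovered_of_reflTransGen (hS : IsPAEW 𝔄 𝔅 S) {x₀ x : 𝔄.E}
    (hx₀ : PreCovered S x₀) (hreach : Relation.ReflTransGen (stepRel 𝔄) x₀ x) :
    PreCovered S x := by
  induction hreach with
  | refl => exact hx₀
  | tail _ hstep ih => exact hS.preCovered_of_stepRel ih hstep

end IsPAEW

/-- if every event of `𝔄` is reachable from an actual event (i.e.
`𝔄 = G(𝔄, E₀^𝔄)`) and `S` is a propositional action emulation witnessing `𝔄 ⇄_P 𝔅`, then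
for every event `x`, `Pre^𝔄(x) ⊨ ⋁_{y : S(x,y)} Pre^𝔅(y)`. -/
theorem reach_all (𝔄 𝔅 : ActionModel A P)
    (hgen : ∀ x : 𝔄.E, ∃ x₀ ∈ 𝔄.actual, Relation.ReflTransGen (stepRel 𝔄) x₀ x)
    (S : 𝔄.E → 𝔅.E → Prop) (hS : IsPAEW 𝔄 𝔅 S) :
    ∀ (x : 𝔄.E) (M : Kripke A P) (w : M.W), sat M w (𝔄.pre x) →
      ∃ y, S x y ∧ sat M w (𝔅.pre y) := by
  intro x
  obtain ⟨x₀, hx₀, hreach⟩ := hgen x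
  exact hS.preCovered_of_reflTransGen (hS.preCovered_of_mem_actual hx₀) hreach
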